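/- arXiv:chao-dyn/9901025 — 9 statements merged into one kernel-verified Lean document; each statement's English description precedes it below -/
import Mathlib

section
/- The discriminant of the polynomial R(z) = z^3 - (h - εz - z^2)^2, viewed as a polynomial of degree 4 in z, equals -h^3 [256 h^2 + (27 - 144ε + 128ε^2) h + 4ε^3(4ε - 1)], up to a nonzero constant factor. -/
/-- The discriminant of a quartic polynomial `a z^4 + b z^3 + c z^2 + d z + e`. -/
noncomputable def disc4 (a b c d e : ℝ) : ℝ :=
  256*a^3*e^3 - 192*a^2*b*d*e^2 - 128*a^2*c^2*e^2 + 144*a^2*c*d^2*e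
  - 27*a^2*d^4 + 144*a*b^2*c*e^2 - 6*a*b^2*d^2*e - 80*a*b*c^2*d*e
  + 18*a*b*c*d^3 + 16*a*c^4*e - 4*a*c^3*d^2 - 27*b^4*e^2
  + 18*b^3*c*d*e - 4*b^3*d^3 - 4*b^2*c^3*e + b^2*c^2*d^2

/-- The discriminant of `R(z) = z^3 - (h - εz - z^2)^2`, viewed as a quartic in `z`,
equals `-h^3 [256 h^2 + (27 - 144ε + 128ε^2) h + 4ε^3(4ε - 1)]` up to a nonzero
constant factor (independent of `ε` and `h`). -/
theorem stmt0 : ∃ k : ℝ, k ≠ 0 ∧ ∀ ε h a b c d e : ℝ,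
    (∀ z : ℝ, a*z^4 + b*z^3 + c*z^2 + d*z + e = z^3 - (h - ε*z - z^2)^2) →
    disc4 a b c d e =
      k * (-(h^3) * (256*h^2 + (27 - 144*ε + 128*ε^2)*h + 4*ε^3*(4*ε - 1))) := by
  refine ⟨1, one_ne_zero, fun ε h a b c d e hp => ?_⟩
  have h0 := hp 0
  have h1 := hp 1
  have h2 := hp (-1)
  have h3 := hp 2
  have h4 := hp (-2)
  have he : e = -h^2 := by linear_combination h0
  have ha : a = -1 := by
    linear_combination (1/24)*h3 + (1/24)*h4 - (1/6)*h1 - (1/6)*h2 + (1/4)*h0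
  have hb : b = 1 - 2*ε := by
    linear_combination (1/12)*h3 - (1/12)*h4 - (1/6)*h1 + (1/6)*h2
  have hc : c = 2*h - ε^2 := by
    linear_combination (2/3)*h1 + (2/3)*h2 - (1/24)*h3 - (1/24)*h4 - (5/4)*h0
  have hd : d = 2*ε*h := by
    linear_combination (2/3)*h1 - (2/3)*h2 - (1/12)*h3 + (1/12)*h4
  subst ha hb hc hd he
  simp only [disc4]
  ring
end

section
/- For the resonant normal form H(I,φ) = εI + AI^2 + BI^{3/2}cos(3φ) with ε ≠ 0, the zeroth-order twist at the origin is τ₀ = 2A - 3B²/(2ε), and the first-order twist is τ₁ = (3/2)(B²/ε³)(8εA - 3B²). -/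
/-!
Write the branch of `√R` as `z·u(z)` with `u 0 = iε`. Cancelling `z²` in the curve equation gives
`u² = B²z - (ε + Az)²` near `0`; differentiating once and twice determines `u'(0)` and `u''(0)`.
Each residue is a Taylor coefficient of `P/u³`, `Q²/u⁵` or `1/u³` at `0`, hence a rational
function of `ε, A, B, u'(0), u''(0)`, and both twists follow by algebra using `i² = -1`.
-/

open Complex
open Filter Topology

section Calculus

variable {𝕜 : Type*} [NontriviallyNormedField 𝕜] {f g u : 𝕜 → 𝕜} {x : 𝕜}

lemma deriv_quadratic (a b c x : 𝕜) :
    deriv (fun z => a + b * z + c * z ^ 2) x = b + 2 * c * x :=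
  ((((hasDerivAt_id x).const_mul b).const_add a).add
    ((hasDerivAt_pow 2 x).const_mul c)).deriv.trans
      (by simp only [mul_one, Nat.cast_ofNat, Nat.add_one_sub_one, pow_one]; ring)

lemma iteratedDeriv_two_quadratic (a b c x : 𝕜) :
    iteratedDeriv 2 (fun z => a + b * z + c * z ^ 2) x = 2 * c := by
  rw [iteratedDeriv_succ, iteratedDeriv_one, funext (deriv_quadratic a b c)]
  simp

lemma inv_pow_eq_zpow (n : ℕ) : (fun w : 𝕜 => (w ^ n)⁻¹) = fun w => w ^ (-(n : ℤ)) := by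
  ext w
  rw [zpow_neg, zpow_natCast]

lemma zpow_neg_natCast_sub (w : 𝕜) (n k : ℕ) : w ^ (-(n : ℤ) - k) = (w ^ (n + k))⁻¹ := by
  rw [← zpow_natCast, ← zpow_neg]
  push_cast
  ring_nf

lemma deriv_inv_pow_comp (hu : DifferentiableAt 𝕜 u x) (hx : u x ≠ 0) (n : ℕ) :
    deriv (fun z => (u z ^ n)⁻¹) x = -n * deriv u x / u x ^ (n + 1) := by
  have h := (hasDerivAt_zpow (-(n : ℤ)) (u x) (Or.inl hx)).comp x hu.hasDerivAt
  rw [← inv_pow_eq_zpow] at h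
  rw [show (fun z => (u z ^ n)⁻¹) = (fun w => (w ^ n)⁻¹) ∘ u from rfl, h.deriv,
    ← Nat.cast_one (R := ℤ), zpow_neg_natCast_sub]
  push_cast
  ring

lemma iteratedDeriv_two_inv_pow_comp (hu : ContDiffAt 𝕜 2 u x) (hx : u x ≠ 0) (n : ℕ) :
    iteratedDeriv 2 (fun z => (u z ^ n)⁻¹) x =
      n * (n + 1) * deriv u x ^ 2 / u x ^ (n + 2) - n * iteratedDeriv 2 u x / u x ^ (n + 1) := by
  have hg : ContDiffAt 𝕜 2 (fun w : 𝕜 => (w ^ n)⁻¹) (u x) :=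
    (contDiffAt_id.pow n).inv (pow_ne_zero n hx)
  have h := iteratedDeriv_comp_two hg hu
  simp only [Function.comp_def] at h
  rw [h, inv_pow_eq_zpow, iteratedDeriv_eq_iterate, iter_deriv_zpow, deriv_zpow,
    ← Nat.cast_one (R := ℤ), zpow_neg_natCast_sub, zpow_neg_natCast_sub]
  simp only [Finset.prod_range_succ, Finset.prod_range_zero]
  push_cast
  ring

lemma deriv_div_pow (hf : DifferentiableAt 𝕜 f x) (hu : DifferentiableAt 𝕜 u x) (hx : u x ≠ 0)
    (n : ℕ) :
    deriv (fun z => f z / u z ^ n) x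
      = deriv f x / u x ^ n - n * f x * deriv u x / u x ^ (n + 1) := by
  have hv : DifferentiableAt 𝕜 (fun z => (u z ^ n)⁻¹) x := (hu.pow n).inv (pow_ne_zero n hx)
  simp only [div_eq_mul_inv]
  rw [deriv_fun_mul hf hv, deriv_inv_pow_comp hu hx]
  ring

lemma iteratedDeriv_two_mul (hf : ContDiffAt 𝕜 2 f x) (hg : ContDiffAt 𝕜 2 g x) :
    iteratedDeriv 2 (fun z => f z * g z) x = iteratedDeriv 2 f x * g x
      + 2 * deriv f x * deriv g x + f x * iteratedDeriv 2 g x := by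
  rw [iteratedDeriv_fun_mul hf hg]
  simp only [Finset.sum_range_succ, Finset.sum_range_zero, iteratedDeriv_zero, iteratedDeriv_one]
  norm_num
  ring

lemma iteratedDeriv_two_div_pow (hf : ContDiffAt 𝕜 2 f x) (hu : ContDiffAt 𝕜 2 u x)
    (hx : u x ≠ 0) (n : ℕ) :
    iteratedDeriv 2 (fun z => f z / u z ^ n) x =
      iteratedDeriv 2 f x / u x ^ n - 2 * n * deriv f x * deriv u x / u x ^ (n + 1)
        + f x * (n * (n + 1) * deriv u x ^ 2 / u x ^ (n + 2)
          - n * iteratedDeriv 2 u x / u x ^ (n + 1)) := by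
  have hv : ContDiffAt 𝕜 2 (fun z => (u z ^ n)⁻¹) x := (hu.pow n).inv (pow_ne_zero n hx)
  simp only [div_eq_mul_inv]
  rw [iteratedDeriv_two_mul hf hv, iteratedDeriv_two_inv_pow_comp hu hx,
    deriv_inv_pow_comp (hu.differentiableAt two_ne_zero) hx]
  ring

lemma iteratedDeriv_two_quadratic_div_cube (a b : 𝕜) (hu : ContDiffAt 𝕜 2 u 0) (h0 : u 0 ≠ 0) :
    iteratedDeriv 2 (fun z => -(a * z + b * z ^ 2) / u z ^ 3) 0
      = -2 * b / u 0 ^ 3 + 6 * a * deriv u 0 / u 0 ^ 4 := by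
  have hP : (fun z => -(a * z + b * z ^ 2) / u z ^ 3)
      = fun z => (0 + -a * z + -b * z ^ 2) / u z ^ 3 := by
    funext z
    ring
  rw [hP, iteratedDeriv_two_div_pow (by fun_prop) hu h0, deriv_quadratic,
    iteratedDeriv_two_quadratic]
  push_cast
  ring

lemma deriv_sq_eq (hu : DifferentiableAt 𝕜 u x) (h : (fun z => u z ^ 2) =ᶠ[𝓝 x] g) :
    2 * u x * deriv u x = deriv g x := by
  rw [← h.deriv_eq]
  simp [hu]

lemma iteratedDeriv_two_sq_eq (hu : ContDiffAt 𝕜 2 u x) (h : (fun z => u z ^ 2) =ᶠ[𝓝 x] g) :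
    2 * (deriv u x ^ 2 + u x * iteratedDeriv 2 u x) = iteratedDeriv 2 g x := by
  rw [← h.iteratedDeriv_eq, funext fun z => sq (u z), iteratedDeriv_two_mul hu hu]
  ring

lemma sq_eventuallyEq_of_mul_sq (h : ∀ᶠ z in 𝓝 0, (z * u z) ^ 2 = z ^ 2 * g z)
    (h0 : u 0 ^ 2 = g 0) : (fun z => u z ^ 2) =ᶠ[𝓝 0] g := by
  filter_upwards [h] with z hz
  rcases eq_or_ne z 0 with rfl | hz0
  · exact h0
  · exact mul_left_cancel₀ (pow_ne_zero 2 hz0) (by linear_combination hz)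

end Calculus

lemma branch_derivs_at_zero (A B ε : ℝ) (hε : ε ≠ 0) (u : ℂ → ℂ)
    (hu : AnalyticAt ℂ u 0) (hu0 : u 0 = I * ε)
    (hR : ∀ᶠ z in 𝓝 (0:ℂ), (z * u z)^2 = (B:ℂ)^2 * z^3 - ((ε:ℂ)*z + (A:ℂ)*z^2)^2) :
    deriv u 0 = I * (2 * A * ε - B ^ 2) / (2 * ε) ∧
      iteratedDeriv 2 u 0 = I * B ^ 2 * (4 * A * ε - B ^ 2) / (4 * ε ^ 3) := by
  have hε' : (ε : ℂ) ≠ 0 := ofReal_ne_zero.mpr hε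
  have hsq : (fun z => u z ^ 2) =ᶠ[𝓝 0]
      fun z => -(ε : ℂ) ^ 2 + ((B : ℂ) ^ 2 - 2 * A * ε) * z + -(A : ℂ) ^ 2 * z ^ 2 := by
    refine sq_eventuallyEq_of_mul_sq (hR.mono fun z hz => by rw [hz]; ring) ?_
    rw [hu0]
    linear_combination (ε : ℂ) ^ 2 * I_sq
  have h1 := deriv_sq_eq hu.differentiableAt hsq
  have h2 := iteratedDeriv_two_sq_eq hu.contDiffAt hsq
  rw [deriv_quadratic, hu0] at h1
  rw [iteratedDeriv_two_quadratic, hu0] at h2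
  have hu1 : deriv u 0 = I * (2 * A * ε - B ^ 2) / (2 * ε) := by
    field_simp
    linear_combination (-I) * h1 + (2 * ε * deriv u 0) * I_sq
  refine ⟨hu1, ?_⟩
  rw [hu1] at h2
  field_simp at h2 ⊢
  linear_combination (-I) * h2
    + (I * (2 * A * ε - B ^ 2) ^ 2 + 4 * ε ^ 3 * iteratedDeriv 2 u 0) * I_sq

/-- Twists of the resonant normal form `H = εI + AI² + BI^{3/2}cos 3φ`, `ε ≠ 0`.
With `R(z) = B²z³ - (εz + Az²)²` (the `h = 0` curve `y² = Q² - (h-P)²`) and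
`z·u(z)` the branch of `√R` with `u 0 = iε`, the residues at `z = 0` of
`-P/y³` and of `3Q²/y⁵ - 2/y³` give `J''(0) = i·Res₂` and `J'''(0) = i·Res₃`,
and the twists are `τ₀ = -ε³J''(0) = 2A - 3B²/(2ε)` and
`τ₁ = ε⁴(3εJ''(0)² - J'''(0)) = (3/2)(B²/ε³)(8εA - 3B²)`. -/
theorem stmt3 (A B ε : ℝ) (hε : ε ≠ 0) (u : ℂ → ℂ)
    (hu : AnalyticAt ℂ u 0) (hu0 : u 0 = I * ε)
    (hR : ∀ᶠ z in nhds (0:ℂ),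
      (z * u z)^2 = (B:ℂ)^2 * z^3 - ((ε:ℂ)*z + (A:ℂ)*z^2)^2) :
    -- residue of `-P(z)/R(z)^{3/2} = -P(z)/(z³ u(z)³)` at `z = 0`
    let res2 : ℂ := (1/2) *
      iteratedDeriv 2 (fun z => -((ε:ℂ)*z + (A:ℂ)*z^2) / (u z)^3) 0
    -- residue of `3Q(z)²/R(z)^{5/2} - 2/R(z)^{3/2} = 3B²/(z²u⁵) - 2/(z³u³)` at `z = 0`
    let res3 : ℂ := iteratedDeriv 1 (fun z => 3*(B:ℂ)^2 / (u z)^5) 0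
      + (1/2) * iteratedDeriv 2 (fun z => -2 / (u z)^3) 0
    let J2 : ℂ := I * res2   -- J''(0)
    let J3 : ℂ := I * res3   -- J'''(0)
    (-(ε:ℂ)^3 * J2 = ((2*A - 3*B^2/(2*ε) : ℝ) : ℂ) ∧
     (ε:ℂ)^4 * (3*(ε:ℂ)*J2^2 - J3) = (((3/2) * (B^2/ε^3) * (8*ε*A - 3*B^2) : ℝ) : ℂ)) := by
  intro res2 res3 J2 J3
  have hε' : (ε : ℂ) ≠ 0 := ofReal_ne_zero.mpr hε
  have hne : u 0 ≠ 0 := by rw [hu0]; exact mul_ne_zero I_ne_zero hε'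
  obtain ⟨hu1, hu2⟩ := branch_derivs_at_zero A B ε hε u hu hu0 hR
  have hres2 : res2 = (1 / 2) * (-2 * A / u 0 ^ 3 + 6 * ε * deriv u 0 / u 0 ^ 4) :=
    congrArg (1 / 2 * ·) (iteratedDeriv_two_quadratic_div_cube _ _ hu.contDiffAt hne)
  have hres3 : res3 = -15 * B ^ 2 * deriv u 0 / u 0 ^ 6
      - (12 * deriv u 0 ^ 2 / u 0 ^ 5 - 3 * iteratedDeriv 2 u 0 / u 0 ^ 4) := by
    simp only [res3]
    rw [iteratedDeriv_two_div_pow contDiffAt_const hu.contDiffAt hne, iteratedDeriv_one,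
      deriv_div_pow (differentiableAt_const _) hu.differentiableAt hne]
    simp only [deriv_const', iteratedDeriv_const, OfNat.ofNat_ne_zero, if_false]
    push_cast
    ring
  constructor
  · show -(ε : ℂ) ^ 3 * (I * res2) = _
    rw [hres2, hu0, hu1]
    push_cast
    field_simp
    ring_nf
    simp only [I_sq]
    ring
  · show (ε : ℂ) ^ 4 * (3 * (ε : ℂ) * (I * res2) ^ 2 - I * res3) = _
    rw [hres2, hres3, hu0, hu1, hu2]
    push_cast
    field_simp
    ring_nf
    simp only [I_sq, I_pow_four]
    ring
end

section
/- The polynomial p(t) = 105 - 305t² + 353t⁴ - 167t⁶ + 30t⁸ is strictly positive for all real t. -/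
/-- The polynomial `105 - 305t² + 353t⁴ - 167t⁶ + 30t⁸` is strictly positive for all
real `t`. -/
theorem stmt9 (t : ℝ) : 0 < 105 - 305*t^2 + 353*t^4 - 167*t^6 + 30*t^8 := by
  nlinarith [sq_nonneg t, sq_nonneg (t^2), sq_nonneg (t^2-1), sq_nonneg (t^3-t), sq_nonneg (t^4 - 3*t^2 + 1), sq_nonneg (t^4-2*t^2), sq_nonneg (t^3 - 2*t), sq_nonneg (t^4 - t^2 -1)]
end

section
/- For the cubic map twist formula: if c = (5 - 3t₀²)/(3t₀(t₀² - 3)) (the value making τ₀ = 0 at t = t₀), then τ₁ = (1/π)·(105 - 305t₀² + 353t₀⁴ - 167t₀⁶ + 30t₀⁸)/(48t₀³(t₀² - 3)³(t₀² - 1)) is nonzero for every t₀ > 0 with t₀ ∉ {1, √3}. -/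
/-- For the cubic map, if `c` is chosen so that `τ₀ = 0` at `t = t₀`, i.e.
`c = (5 - 3t₀²)/(3t₀(t₀² - 3))`, then the resulting second twist
`τ₁ = (1/π)(105 - 305t₀² + 353t₀⁴ - 167t₀⁶ + 30t₀⁸)/(48t₀³(t₀²-3)³(t₀²-1))`
is nonzero for every `t₀ > 0` with `t₀ ∉ {1, √3}`. -/
theorem stmt10 (t₀ c : ℝ) (h0 : 0 < t₀) (h1 : t₀ ≠ 1) (h3 : t₀ ≠ Real.sqrt 3)
    (hc : c = (5 - 3*t₀^2) / (3*t₀*(t₀^2 - 3))) :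
    (1/Real.pi) * ((105 - 305*t₀^2 + 353*t₀^4 - 167*t₀^6 + 30*t₀^8) /
      (48*t₀^3*(t₀^2 - 3)^3*(t₀^2 - 1))) ≠ 0 := by
  have hnum : (105 - 305*t₀^2 + 353*t₀^4 - 167*t₀^6 + 30*t₀^8) > 0 := by
    nlinarith [sq_nonneg (t₀^2 - 1), sq_nonneg (t₀^4 - 3*t₀^2 + 1),
      sq_nonneg (t₀^3 - 2*t₀), sq_nonneg t₀, sq_nonneg (t₀^2 - 2),
      sq_nonneg (t₀^4 - 2*t₀^2), sq_nonneg (t₀^3 - 3*t₀), sq_nonneg (t₀^2-3)]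
  have h3' : t₀^2 - 3 ≠ 0 := by
    intro h
    apply h3
    have : t₀^2 = 3 := by linarith
    rw [← this, Real.sqrt_sq h0.le]
  have h1' : t₀^2 - 1 ≠ 0 := by
    intro h
    apply h1
    have : t₀^2 = 1 := by linarith
    nlinarith
  have hden : 48*t₀^3*(t₀^2 - 3)^3*(t₀^2 - 1) ≠ 0 := by
    positivity
  have hpi : (1/Real.pi) ≠ 0 := by
    simp [Real.pi_ne_zero]
  exact mul_ne_zero hpi (div_ne_zero hnum.ne' hden)
end

section
/- Setting τ₀ = 0 at ω₀ = 1/5 for the cubic map: with t₀ = tan(π/5), the solution of 3c/8 + (5 - 3t₀²)/(8t₀(t₀² - 3)) = 0 is c = (1/6)√(10 + 2√5); for ω₀ = 2/5 (t₀ = tan(2π/5)) it is c = (1/6)√(10 - 2√5). -/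
open Real

private lemma aux1 (t s r : ℝ) (ht : 0 < t) (hs2 : s^2 = 5) (hs : 1 < s)
    (ht2 : t^2 = 5 - 2*s) (hr : 0 ≤ r) (hr2 : r^2 = 10 + 2*s) :
    ∀ c : ℝ, 3*c/8 + (5 - 3*t^2) / (8*t*(t^2 - 3)) = 0 ↔ c = r/6 := by
  have hrpos : 0 < r := by
    rcases hr.lt_or_eq with h | h
    · exact h
    · exfalso; nlinarith
  have hpsq : (t*r)^2 = 30 - 10*s := by
    linear_combination r^2*ht2 + (5-2*s)*hr2 - 4*hs2
  have hp : t*r*(1-s) = 10 - 6*s := by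
    have hsq : (t*r*(1-s)) * (t*r*(1-s)) = (10-6*s) * (10-6*s) := by
      linear_combination (1-s)^2*hpsq + (14-10*s)*hs2
    rcases mul_self_eq_mul_self_iff.1 hsq with h | h
    · exact h
    · exfalso
      have h1 : 0 < t*r := mul_pos ht hrpos
      nlinarith
  have hd : 8*t*(t^2 - 3) ≠ 0 := by
    have : t^2 - 3 < 0 := by nlinarith
    have := ht.ne'
    intro h
    rcases mul_eq_zero.1 h with h' | h'
    · rcases mul_eq_zero.1 h' with h'' | h'' <;> simp_all
    · linarith
  have H : 3*(r/6)/8 + (5 - 3*t^2) / (8*t*(t^2 - 3)) = 0 := by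
    rw [div_add_div _ _ (by norm_num) hd, div_eq_zero_iff]
    left
    ring_nf
    linear_combination 4*(t*r-6)*ht2 + 8*hp
  intro c
  constructor
  · intro h; linarith [h, H]
  · intro h; rw [h]; exact H

private lemma aux2 (t s r : ℝ) (ht : 0 < t) (hs2 : s^2 = 5) (hs : 1 < s)
    (ht2 : t^2 = 5 + 2*s) (hr : 0 ≤ r) (hr2 : r^2 = 10 - 2*s) :
    ∀ c : ℝ, 3*c/8 + (5 - 3*t^2) / (8*t*(t^2 - 3)) = 0 ↔ c = r/6 := by
  have hrpos : 0 < r := by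
    rcases hr.lt_or_eq with h | h
    · exact h
    · exfalso; nlinarith
  have hpsq : (t*r)^2 = 30 + 10*s := by
    linear_combination r^2*ht2 + (5+2*s)*hr2 - 4*hs2
  have hp : t*r*(1+s) = 10 + 6*s := by
    have hsq : (t*r*(1+s)) * (t*r*(1+s)) = (10+6*s) * (10+6*s) := by
      linear_combination (1+s)^2*hpsq + (14+10*s)*hs2
    rcases mul_self_eq_mul_self_iff.1 hsq with h | h
    · exact h
    · exfalso
      have h1 : 0 < t*r := mul_pos ht hrpos
      nlinarith
  have hd : 8*t*(t^2 - 3) ≠ 0 := by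
    have : 0 < t^2 - 3 := by nlinarith
    have := ht.ne'
    intro h
    rcases mul_eq_zero.1 h with h' | h'
    · rcases mul_eq_zero.1 h' with h'' | h'' <;> simp_all
    · linarith
  have H : 3*(r/6)/8 + (5 - 3*t^2) / (8*t*(t^2 - 3)) = 0 := by
    rw [div_add_div _ _ (by norm_num) hd, div_eq_zero_iff]
    left
    ring_nf
    linear_combination 4*(t*r-6)*ht2 + 8*hp
  intro c
  constructor
  · intro h; linarith [h, H]
  · intro h; rw [h]; exact H

/-- Setting `τ₀ = 0` at `ω₀ = 1/5` for the cubic map: with `t₀ = tan(π/5)`, the unique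
solution of `3c/8 + (5 - 3t₀²)/(8t₀(t₀² - 3)) = 0` is `c = (1/6)√(10 + 2√5)`; for
`ω₀ = 2/5`, i.e. `t₀ = tan(2π/5)`, it is `c = (1/6)√(10 - 2√5)`. -/
theorem stmt11 :
    (∀ c : ℝ,
      3*c/8 + (5 - 3*(tan (π/5))^2) / (8*(tan (π/5))*((tan (π/5))^2 - 3)) = 0 ↔
        c = Real.sqrt (10 + 2*Real.sqrt 5) / 6) ∧
    (∀ c : ℝ,
      3*c/8 + (5 - 3*(tan (2*π/5))^2) / (8*(tan (2*π/5))*((tan (2*π/5))^2 - 3)) = 0 ↔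
        c = Real.sqrt (10 - 2*Real.sqrt 5) / 6) := by
  have hs2 : (Real.sqrt 5)^2 = 5 := Real.sq_sqrt (by norm_num)
  have hs1 : 1 < Real.sqrt 5 := by nlinarith [Real.sqrt_nonneg 5]
  have hc1 : cos (π/5) = (1 + Real.sqrt 5)/4 := Real.cos_pi_div_five
  have hc1pos : 0 < cos (π/5) := by rw [hc1]; positivity
  have hc2 : cos (2*π/5) = (Real.sqrt 5 - 1)/4 := by
    have : (2*π/5) = 2*(π/5) := by ring
    rw [this, Real.cos_two_mul, hc1]
    nlinarith
  have hc2pos : 0 < cos (2*π/5) := by rw [hc2]; linarith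
  have ht1 : 0 < tan (π/5) :=
    Real.tan_pos_of_pos_of_lt_pi_div_two (by positivity) (by linarith [pi_pos])
  have ht2' : 0 < tan (2*π/5) :=
    Real.tan_pos_of_pos_of_lt_pi_div_two (by positivity) (by linarith [pi_pos])
  have htan1 : (tan (π/5))^2 = 5 - 2*Real.sqrt 5 := by
    rw [Real.tan_eq_sin_div_cos, div_pow, Real.sin_sq, hc1]
    have h4 : 1 + Real.sqrt 5 ≠ 0 := ne_of_gt (by linarith)
    field_simp
    nlinarith [hs2]
  have htan2 : (tan (2*π/5))^2 = 5 + 2*Real.sqrt 5 := by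
    rw [Real.tan_eq_sin_div_cos, div_pow, Real.sin_sq, hc2]
    have h4 : Real.sqrt 5 - 1 ≠ 0 := ne_of_gt (by linarith)
    field_simp
    nlinarith [hs2]
  have hr1 : (Real.sqrt (10 + 2*Real.sqrt 5))^2 = 10 + 2*Real.sqrt 5 :=
    Real.sq_sqrt (by positivity)
  have hr2 : (Real.sqrt (10 - 2*Real.sqrt 5))^2 = 10 - 2*Real.sqrt 5 :=
    Real.sq_sqrt (by nlinarith)
  exact ⟨aux1 _ _ _ ht1 hs2 hs1 htan1 (Real.sqrt_nonneg _) hr1,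
    aux2 _ _ _ ht2' hs2 hs1 htan2 (Real.sqrt_nonneg _) hr2⟩
end

section
/- Let f(z) = λ(z + αz̄^{n-1}) with n ≥ 3 odd, λⁿ = 1, α ≠ 0 complex. After the scaling z → sz with s̄^{n-1}/s = 1/(nα), the n-th power satisfies (f(z))ⁿ = zⁿ + (zz̄)^{n-1} + O(|z|^{2n-1}). -/
open ComplexConjugate Asymptotics Finset Topology

/-! The normalisation `s̄^{n-1}/s = 1/(nα)` turns the scaled map into `λ(z + z̄^{n-1}/n)`, whose
`n`-th power is `(z + z̄^{n-1}/n)ⁿ` since `λⁿ = 1`. In the binomial expansion the two top terms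
are `zⁿ` and `n · z^{n-1} · z̄^{n-1}/n = (z z̄)^{n-1}`; every other term carries at least two factors
`z̄^{n-1}` and so has total degree at least `3n - 4 ≥ 2n - 1`. -/

theorem add_pow_succ_eq_sum_range_add_add {R : Type*} [CommSemiring R] (x y : R) (m : ℕ) :
    (x + y) ^ (m + 1) = ∑ k ∈ range m, x ^ k * y ^ (m + 1 - k) * (m + 1).choose k
      + (m + 1) * x ^ m * y + x ^ (m + 1) := by
  rw [add_pow, sum_range_succ, sum_range_succ, Nat.choose_succ_self_right, Nat.choose_self]
  push_cast
  simp only [Nat.sub_self, Nat.add_sub_cancel_left, pow_zero, pow_one]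
  ring

lemma isBigO_monomial_conj {a b N : ℕ} (C : ℂ) (h : N ≤ a + b) :
    (fun z : ℂ => C * z ^ a * conj z ^ b) =O[𝓝 0] fun z => ‖z‖ ^ N := by
  refine isBigO_iff.mpr ⟨‖C‖, ?_⟩
  filter_upwards [Metric.ball_mem_nhds (0 : ℂ) one_pos] with z hz
  rw [mem_ball_zero_iff] at hz
  calc ‖C * z ^ a * conj z ^ b‖ = ‖C‖ * ‖z‖ ^ (a + b) := by
        simp only [norm_mul, norm_pow, Complex.norm_conj, pow_add, mul_assoc]
    _ ≤ ‖C‖ * ‖‖z‖ ^ N‖ := by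
        rw [norm_pow, norm_norm]
        exact mul_le_mul_of_nonneg_left (pow_le_pow_of_le_one (norm_nonneg z) hz.le h)
          (norm_nonneg C)

lemma add_mul_conj_pow_div_eq {n : ℕ} (hn : n ≠ 0) {α s : ℂ} (hα : α ≠ 0)
    (hscale : conj s ^ (n - 1) / s = 1 / (n * α)) (z : ℂ) :
    z + α * conj (s * z) ^ (n - 1) / s = z + conj z ^ (n - 1) / n := by
  have hn' : (n : ℂ) ≠ 0 := Nat.cast_ne_zero.mpr hn
  calc z + α * conj (s * z) ^ (n - 1) / s
      = z + α * (conj s ^ (n - 1) / s) * conj z ^ (n - 1) := by rw [map_mul, mul_pow]; ring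
    _ = z + conj z ^ (n - 1) / n := by rw [hscale]; field_simp

lemma add_conj_pow_div_pow_sub_top_terms (m : ℕ) (z : ℂ) :
    (z + conj z ^ m / ((m + 1 : ℕ) : ℂ)) ^ (m + 1) - z ^ (m + 1) - (z * conj z) ^ m
      = ∑ k ∈ range m, (((m + 1 : ℕ) : ℂ)⁻¹ ^ (m + 1 - k) * (m + 1).choose k)
          * z ^ k * conj z ^ (m * (m + 1 - k)) := by
  have top : ((m : ℂ) + 1) * z ^ m * (conj z ^ m / ((m + 1 : ℕ) : ℂ)) = (z * conj z) ^ m := by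
    have hm : (m : ℂ) + 1 ≠ 0 := by exact_mod_cast m.succ_ne_zero
    push_cast
    field_simp
    ring
  rw [add_pow_succ_eq_sum_range_add_add, top, add_sub_cancel_right, add_sub_cancel_right]
  refine sum_congr rfl fun k _ => ?_
  rw [div_pow, pow_mul]
  ring

theorem stmt12_general (n : ℕ) (hn : 3 ≤ n) (lam α s : ℂ)
    (hlam : lam^n = 1) (hα : α ≠ 0)
    (hscale : (starRingEnd ℂ s)^(n-1) / s = 1/(n*α)) :
    (fun z : ℂ =>
        (lam * (z + α * ((starRingEnd ℂ) (s*z))^(n-1) / s))^n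
          - z^n - (z * (starRingEnd ℂ) z)^(n-1))
      =O[nhds (0:ℂ)] (fun z : ℂ => ‖z‖^(2*n-1)) := by
  obtain ⟨m, rfl⟩ : ∃ m, n = m + 1 := ⟨n - 1, by omega⟩
  have expand : ∀ z : ℂ,
      (lam * (z + α * conj (s * z) ^ (m + 1 - 1) / s)) ^ (m + 1)
          - z ^ (m + 1) - (z * conj z) ^ (m + 1 - 1)
        = ∑ k ∈ range m, (((m + 1 : ℕ) : ℂ)⁻¹ ^ (m + 1 - k) * (m + 1).choose k)
            * z ^ k * conj z ^ (m * (m + 1 - k)) := fun z => by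
    rw [add_mul_conj_pow_div_eq (by omega) hα hscale, mul_pow, hlam, one_mul,
      Nat.add_sub_cancel, add_conj_pow_div_pow_sub_top_terms]
  rw [funext expand]
  refine IsBigO.fun_sum fun k hk => isBigO_monomial_conj _ ?_
  have hkm := mem_range.mp hk
  obtain ⟨j, hj⟩ : ∃ j, m + 1 - k = j + 2 := ⟨m - 1 - k, by omega⟩
  rw [hj, show 2 * (m + 1) - 1 = 2 * m + 1 by omega]
  nlinarith [show k + j + 1 = m by omega]

/-- For `f(z) = λ(z + α z̄^{n-1})` with `n ≥ 3` odd, `λⁿ = 1`, `α ≠ 0`: after the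
scaling `z ↦ sz` with `s̄^{n-1}/s = 1/(nα)` (the scaled map being `z ↦ f(sz)/s`), the
`n`-th power satisfies `(f(sz)/s)ⁿ = zⁿ + (z z̄)^{n-1} + O(|z|^{2n-1})` as `z → 0`. -/
theorem stmt12 (n : ℕ) (hn : 3 ≤ n) (hodd : Odd n) (lam α s : ℂ)
    (hlam : lam^n = 1) (hα : α ≠ 0) (hs : s ≠ 0)
    (hscale : (starRingEnd ℂ s)^(n-1) / s = 1/(n*α)) :
    (fun z : ℂ =>
        (lam * (z + α * ((starRingEnd ℂ) (s*z))^(n-1) / s))^n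
          - z^n - (z * (starRingEnd ℂ) z)^(n-1))
      =O[nhds (0:ℂ)] (fun z : ℂ => ‖z‖^(2*n-1)) :=
  stmt12_general n hn lam α s hlam hα hscale
end

section
/- Suppose a map of the plane, in the coordinate Z = X + iY with R = |Z|, satisfies Z' = Z + R^{2-2/n}(1 + η(Z)R^{1/n}) where n ≥ 3 and η is bounded: |η| ≤ M on a neighborhood of 0. Then the origin is an unstable fixed point: there exists δ > 0 such that for every ρ > 0 there is an initial point with |Z| < ρ whose orbit leaves the disk of radius δ. -/
/-- Instability for the normalized odd-resonance map: if
`Z' = Z + R^{2-2/n}(1 + η(Z) R^{1/n})` with `R = |Z|`, `n ≥ 3`, and `η` bounded on a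
neighborhood of `0`, then the origin is an unstable fixed point: there is `δ > 0` such
that arbitrarily close to `0` there are points whose orbits leave the disk of
radius `δ`. -/
theorem stmt13 (n : ℕ) (hn : 3 ≤ n) (T η : ℂ → ℂ) (M r₁ : ℝ) (hr₁ : 0 < r₁)
    (hbound : ∀ Z : ℂ, ‖Z‖ < r₁ → ‖η Z‖ ≤ M)
    (hT : ∀ Z : ℂ, T Z = Z + (↑(‖Z‖ ^ ((2:ℝ) - 2/(n:ℝ))) : ℂ) *
      (1 + η Z * (↑(‖Z‖ ^ ((1:ℝ)/(n:ℝ))) : ℂ))) :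
    ∃ δ > 0, ∀ ρ > 0, ∃ Z₀ : ℂ, ‖Z₀‖ < ρ ∧ ∃ k : ℕ, δ ≤ ‖T^[k] Z₀‖ := by
  have hn0 : (0:ℝ) < (n:ℝ) := by positivity
  have hnne : (n:ℝ) ≠ 0 := ne_of_gt hn0
  set e : ℝ := (2:ℝ) - 2/(n:ℝ) with he
  have he0 : 0 < e := by
    have : 2/(n:ℝ) ≤ 2/3 := by
      apply div_le_div_of_nonneg_left (by norm_num) (by norm_num)
      exact_mod_cast hn
    simp only [he]; linarith
  set M' : ℝ := max M 1 with hM'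
  have hM'1 : 1 ≤ M' := le_max_right _ _
  have hM'0 : 0 < M' := lt_of_lt_of_le one_pos hM'1
  set δ : ℝ := min (r₁/2) ((2*M')⁻¹ ^ n) with hδ
  have hδ0 : 0 < δ := lt_min (by linarith) (by positivity)
  have hδr₁ : δ < r₁ := lt_of_le_of_lt (min_le_left _ _) (by linarith)
  -- key: for R < δ, M * R^(1/n) ≤ 1/2
  have key : ∀ R : ℝ, 0 ≤ R → R < δ → M * R ^ ((1:ℝ)/(n:ℝ)) ≤ 1/2 := by
    intro R hR0 hRδ
    have h1 : R ^ ((1:ℝ)/(n:ℝ)) ≤ (2*M')⁻¹ := by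
      have hle : R ≤ (2*M')⁻¹ ^ n := le_of_lt (lt_of_lt_of_le hRδ (min_le_right _ _))
      calc R ^ ((1:ℝ)/(n:ℝ)) ≤ ((2*M')⁻¹ ^ n) ^ ((1:ℝ)/(n:ℝ)) := by
            apply Real.rpow_le_rpow hR0 hle (by positivity)
        _ = (2*M')⁻¹ := by
            rw [← Real.rpow_natCast (2*M')⁻¹ n, ← Real.rpow_mul (by positivity),
              mul_one_div_cancel hnne, Real.rpow_one]
    have hpow0 : 0 ≤ R ^ ((1:ℝ)/(n:ℝ)) := Real.rpow_nonneg hR0 _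
    calc M * R ^ ((1:ℝ)/(n:ℝ)) ≤ M' * (2*M')⁻¹ := by
          apply mul_le_mul (le_max_left _ _) h1 hpow0 (le_of_lt hM'0)
      _ = 1/2 := by field_simp
  -- main increment estimate
  have step : ∀ Z : ℂ, 0 < Z.re → ‖Z‖ < δ →
      Z.re + ‖Z‖ ^ e / 2 ≤ (T Z).re := by
    intro Z hZre hZδ
    have hZ0 : (0:ℝ) ≤ ‖Z‖ := norm_nonneg Z
    have hre : (T Z).re = Z.re + ‖Z‖ ^ e * (1 + (η Z).re * ‖Z‖ ^ ((1:ℝ)/(n:ℝ))) := by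
      rw [hT Z]
      simp [Complex.add_re, Complex.mul_re, Complex.ofReal_re, Complex.ofReal_im,
        Complex.one_re, Complex.one_im, Complex.add_im]
    rw [hre]
    have hb : M * ‖Z‖ ^ ((1:ℝ)/(n:ℝ)) ≤ 1/2 := key _ hZ0 hZδ
    have hηre : -M ≤ (η Z).re := by
      have h1 : |(η Z).re| ≤ ‖η Z‖ := Complex.abs_re_le_norm _
      have h2 : ‖η Z‖ ≤ M := hbound Z (lt_trans hZδ hδr₁)
      have := neg_abs_le (η Z).re
      linarith
    have hpow0 : 0 ≤ ‖Z‖ ^ ((1:ℝ)/(n:ℝ)) := Real.rpow_nonneg hZ0 _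
    have h3 : -(1/2) ≤ (η Z).re * ‖Z‖ ^ ((1:ℝ)/(n:ℝ)) := by
      have := mul_le_mul_of_nonneg_right hηre hpow0
      have : -(M * ‖Z‖ ^ ((1:ℝ)/(n:ℝ))) ≤ (η Z).re * ‖Z‖ ^ ((1:ℝ)/(n:ℝ)) := by
        nlinarith
      linarith
    have h4 : (1:ℝ)/2 ≤ 1 + (η Z).re * ‖Z‖ ^ ((1:ℝ)/(n:ℝ)) := by linarith
    have h5 : ‖Z‖ ^ e * (1/2) ≤ ‖Z‖ ^ e * (1 + (η Z).re * ‖Z‖ ^ ((1:ℝ)/(n:ℝ))) := by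
      apply mul_le_mul_of_nonneg_left h4 (Real.rpow_nonneg hZ0 _)
    linarith
  refine ⟨δ, hδ0, ?_⟩
  intro ρ hρ
  set x : ℝ := min (ρ/2) (δ/2) with hx
  have hx0 : 0 < x := lt_min (by linarith) (by linarith)
  have hxρ : x < ρ := lt_of_le_of_lt (min_le_left _ _) (by linarith)
  have hxδ : x < δ := lt_of_le_of_lt (min_le_right _ _) (by linarith)
  refine ⟨(x:ℂ), by simpa [abs_of_pos hx0] using hxρ, ?_⟩
  by_contra hcon
  push_neg at hcon
  set c : ℝ := x ^ e / 2 with hc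
  have hc0 : 0 < c := by positivity
  -- induction: Re (T^[k] x) ≥ x + k*c
  have ind : ∀ k : ℕ, x + k * c ≤ (T^[k] (x:ℂ)).re := by
    intro k
    induction k with
    | zero => simp
    | succ k ih =>
      set Z := T^[k] (x:ℂ) with hZ
      have hk0 : (0:ℝ) ≤ (k:ℝ) := Nat.cast_nonneg k
      have hZre : 0 < Z.re := by nlinarith
      have hZδ : ‖Z‖ < δ := hcon k
      have hnormre : Z.re ≤ ‖Z‖ := Complex.re_le_norm Z
      have hxZ : x ≤ ‖Z‖ := by nlinarith
      have hmono : x ^ e ≤ ‖Z‖ ^ e :=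
        Real.rpow_le_rpow (le_of_lt hx0) hxZ (le_of_lt he0)
      have hstep := step Z hZre hZδ
      rw [Function.iterate_succ_apply']
      push_cast
      have : Z.re + ‖Z‖ ^ e / 2 ≤ (T Z).re := hstep
      have h2 : x + k * c + c ≤ Z.re + ‖Z‖ ^ e / 2 := by
        simp only [hc] at *
        linarith
      calc x + (k+1) * c = x + k * c + c := by ring
        _ ≤ (T Z).re := le_trans h2 this
  obtain ⟨k, hk⟩ := Archimedean.arch δ hc0
  have h1 := ind k
  have h2 : (T^[k] (x:ℂ)).re ≤ ‖T^[k] (x:ℂ)‖ := Complex.re_le_norm _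
  have h3 := hcon k
  have : δ ≤ k * c := by simpa [nsmul_eq_mul] using hk
  linarith
end

section
/- (Instability with even-order resonance) If Z' = Z + R^{2-2/n}(1 + β̃e^{iΦ} + η R^{1/n}) with Z = Re^{iΦ}, |β̃| < 1, and η bounded near 0, then the fixed point at the origin is unstable. -/
/-!
Near the origin the real part of the map grows by at least `c ‖Z‖^(2-2/n)` with
`c = (1 - ‖β̃‖)/2`: the term `β̃ e^{iΦ}` costs at most `‖β̃‖`, and `η(Z) ‖Z‖^(1/n) → 0` because
`η` is bounded. Starting on the positive real axis at `x`, every step inside the `δ`-ball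
therefore raises the real part by at least `c x^(2-2/n)`, so the orbit cannot stay in the ball.
-/

open Filter Topology

theorem exists_le_norm_iterate_of_uniform_increase {E : Type*} [Norm E] (φ : E → ℝ)
    (hφ : ∀ z, φ z ≤ ‖z‖) {T : E → E} {δ ε x : ℝ} (hε : 0 < ε)
    (hstep : ∀ z, x ≤ φ z → ‖z‖ < δ → φ z + ε ≤ φ (T z)) {z : E} (hz : x ≤ φ z) :
    ∃ k : ℕ, δ ≤ ‖T^[k] z‖ := by
  by_contra! hsmall
  have hgrow : ∀ k : ℕ, φ z + k * ε ≤ φ (T^[k] z) := by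
    intro k
    induction k with
    | zero => simp
    | succ k ih =>
      have hx : x ≤ φ (T^[k] z) := by linarith [mul_nonneg k.cast_nonneg hε.le]
      rw [Function.iterate_succ_apply']
      push_cast
      linarith [hstep _ hx (hsmall k)]
  obtain ⟨k, hk⟩ := exists_nat_gt ((δ - φ z) / ε)
  rw [div_lt_iff₀ hε] at hk
  linarith [hgrow k, hφ (T^[k] z), hsmall k]

theorem le_re_add_ofReal_rpow_mul (Z β w : ℂ) (a p : ℝ) :
    Z.re + ‖Z‖ ^ a * (1 - ‖β‖ - ‖w‖ * ‖Z‖ ^ p) ≤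
      (Z + (↑(‖Z‖ ^ a) : ℂ) * (1 + β * (Z / (↑(‖Z‖) : ℂ)) + w * (↑(‖Z‖ ^ p) : ℂ))).re := by
  have hunit : ‖Z / (↑(‖Z‖) : ℂ)‖ ≤ 1 := by
    rw [norm_div, Complex.norm_real, Real.norm_of_nonneg (norm_nonneg Z)]
    exact div_self_le_one _
  have hβZ : -‖β‖ ≤ (β * (Z / (↑(‖Z‖) : ℂ))).re := by
    have := Complex.abs_re_le_norm (β * (Z / (↑(‖Z‖) : ℂ)))
    rw [norm_mul] at this
    nlinarith [abs_le.1 this, norm_nonneg β]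
  have hw : -(‖w‖ * ‖Z‖ ^ p) ≤ (w * (↑(‖Z‖ ^ p) : ℂ)).re := by
    have := Complex.abs_re_le_norm (w * (↑(‖Z‖ ^ p) : ℂ))
    rw [norm_mul, Complex.norm_real, Real.norm_of_nonneg (by positivity)] at this
    exact (abs_le.1 this).1
  rw [Complex.add_re, Complex.re_ofReal_mul]
  simp only [Complex.add_re, Complex.one_re]
  gcongr
  linarith

theorem eventually_norm_mul_rpow_lt {E F : Type*} [NormedAddCommGroup E] [Norm F]
    {η : E → F} {M : ℝ} (hη : ∀ᶠ z in 𝓝 0, ‖η z‖ ≤ M) {p ε : ℝ} (hp : 0 < p) (hε : 0 < ε) :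
    ∀ᶠ z in 𝓝 0, ‖η z‖ * ‖z‖ ^ p < ε := by
  have hlim : Tendsto (fun z : E => M * ‖z‖ ^ p) (𝓝 0) (𝓝 0) := by
    have : Continuous fun z : E => M * ‖z‖ ^ p :=
      continuous_const.mul (continuous_norm.rpow_const fun _ => Or.inr hp.le)
    simpa [Real.zero_rpow hp.ne'] using this.tendsto 0
  filter_upwards [hη, hlim.eventually (gt_mem_nhds hε)] with z hηz hMz
  calc ‖η z‖ * ‖z‖ ^ p ≤ M * ‖z‖ ^ p := by gcongr
    _ < ε := hMz

theorem stmt14_general (n : ℕ) (hn : 4 ≤ n) (T η : ℂ → ℂ) (β : ℂ)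
    (hβ : ‖β‖ < 1) (M r₁ : ℝ) (hr₁ : 0 < r₁)
    (hbound : ∀ Z : ℂ, ‖Z‖ < r₁ → ‖η Z‖ ≤ M)
    (hT : ∀ Z : ℂ, Z ≠ 0 → T Z = Z + (↑(‖Z‖ ^ ((2:ℝ) - 2/(n:ℝ))) : ℂ) *
      (1 + β * (Z / (↑(‖Z‖) : ℂ)) + η Z * (↑(‖Z‖ ^ ((1:ℝ)/(n:ℝ))) : ℂ))) :
    ∃ δ > 0, ∀ ρ > 0, ∃ Z₀ : ℂ, ‖Z₀‖ < ρ ∧ ∃ k : ℕ, δ ≤ ‖T^[k] Z₀‖ := by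
  set a : ℝ := 2 - 2 / n
  obtain ⟨c, hc, hβc⟩ : ∃ c > 0, c ≤ 1 - ‖β‖ - c := ⟨(1 - ‖β‖) / 2, by linarith, by linarith⟩
  have hη : ∀ᶠ Z in 𝓝 (0 : ℂ), ‖η Z‖ ≤ M :=
    Metric.eventually_nhds_iff_ball.2 ⟨r₁, hr₁, fun Z hZ => hbound Z (by simpa using hZ)⟩
  obtain ⟨δ, hδ, hsmall⟩ := Metric.eventually_nhds_iff_ball.1
    (eventually_norm_mul_rpow_lt hη (p := 1 / n) (by positivity) hc)
  refine ⟨δ, hδ, fun ρ hρ => ?_⟩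
  obtain ⟨x, hx, hxρ⟩ : ∃ x > 0, x < ρ := ⟨ρ / 2, by linarith, by linarith⟩
  refine ⟨x, by rwa [Complex.norm_real, Real.norm_of_nonneg hx.le],
    exists_le_norm_iterate_of_uniform_increase Complex.re Complex.re_le_norm (x := x)
      (by positivity : 0 < c * x ^ a) (fun Z hxZ hZδ => ?_) (by simp)⟩
  have hZ : Z ≠ 0 := fun h => by simp [h] at hxZ; linarith
  have ha : 0 ≤ a := by
    have : 2 / (n : ℝ) ≤ 2 / 4 := by gcongr; exact_mod_cast hn
    linarith
  have hxZ' : x ^ a ≤ ‖Z‖ ^ a := by gcongr; exact hxZ.trans (Complex.re_le_norm Z)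
  have hbracket : c ≤ 1 - ‖β‖ - ‖η Z‖ * ‖Z‖ ^ (1 / n : ℝ) := by
    linarith [hsmall Z (by simpa using hZδ)]
  rw [hT Z hZ]
  calc Z.re + c * x ^ a ≤ Z.re + ‖Z‖ ^ a * c := by rw [mul_comm c]; gcongr
    _ ≤ Z.re + ‖Z‖ ^ a * (1 - ‖β‖ - ‖η Z‖ * ‖Z‖ ^ (1 / n : ℝ)) := by gcongr
    _ ≤ _ := le_re_add_ofReal_rpow_mul _ _ _ _ _

/-- Instability with even-order resonance: if, for `Z = R e^{iΦ} ≠ 0`,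
`Z' = Z + R^{2-2/n}(1 + β̃ e^{iΦ} + η(Z) R^{1/n})` (here `e^{iΦ} = Z/|Z|`), with `n ≥ 4`
even, `|β̃| < 1`, and `η` bounded near `0`, then the fixed point at the origin is
unstable. -/
theorem stmt14 (n : ℕ) (hn : 4 ≤ n) (heven : Even n) (T η : ℂ → ℂ) (β : ℂ)
    (hβ : ‖β‖ < 1) (M r₁ : ℝ) (hr₁ : 0 < r₁)
    (hbound : ∀ Z : ℂ, ‖Z‖ < r₁ → ‖η Z‖ ≤ M)
    (hT0 : T 0 = 0)
    (hT : ∀ Z : ℂ, Z ≠ 0 → T Z = Z + (↑(‖Z‖ ^ ((2:ℝ) - 2/(n:ℝ))) : ℂ) *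
      (1 + β * (Z / (↑(‖Z‖) : ℂ)) + η Z * (↑(‖Z‖ ^ ((1:ℝ)/(n:ℝ))) : ℂ))) :
    ∃ δ > 0, ∀ ρ > 0, ∃ Z₀ : ℂ, ‖Z₀‖ < ρ ∧ ∃ k : ℕ, δ ≤ ‖T^[k] Z₀‖ :=
  stmt14_general n hn T η β hβ M r₁ hr₁ hbound hT
end

section
/- For the resonant Hamiltonian H = εI + AI² + BI^{n/2}cos(nφ) with n > 3 and ε ≠ 0, the zeroth-order twist at the origin equals 2A, independent of B; in terms of the residue computation, Res_{z=0} (−P(z))/R(z)^{3/2} with R(z) = B²zⁿ − (εz + Az²)² and P(z) = εz + Az² yields τ₀ = 2A. -/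
/-!
Dividing `R(z) = z² u(z)²` by `z²` (identity theorem) gives `u² = B² z^{n-2} - (ε + A z)²`.
Since `n - 2 ≥ 2`, the `B`-term has no linear part, so differentiating at `0` gives
`2 u(0) u'(0) = -2εA`, i.e. `u'(0) = iA` whatever `B` is. As `P(0) = 0`, Leibniz' rule gives
`(-P u⁻³)''(0) = -P''(0) u(0)⁻³ - 2 P'(0) (u⁻³)'(0)`, which involves only `u(0)` and `u'(0)`
and equals `4iA/ε³`; hence `τ₀ = 2A`.
-/

open Complex Filter Topology

section
variable {𝕜 : Type*} [NontriviallyNormedField 𝕜]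

theorem AnalyticAt.eventuallyEq_of_pow_smul_eventuallyEq {E : Type*} [NormedAddCommGroup E]
    [NormedSpace 𝕜 E] {f g : 𝕜 → E} {x : 𝕜} {k : ℕ}
    (hf : AnalyticAt 𝕜 f x) (hg : AnalyticAt 𝕜 g x)
    (h : ∀ᶠ z in 𝓝 x, (z - x) ^ k • f z = (z - x) ^ k • g z) : f =ᶠ[𝓝 x] g := by
  refine (hf.frequently_eq_iff_eventually_eq hg).mp (Eventually.frequently ?_)
  filter_upwards [eventually_nhdsWithin_of_eventually_nhds h, self_mem_nhdsWithin] with z hz hzx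
  exact smul_right_injective E (pow_ne_zero k (sub_ne_zero.mpr hzx)) hz

theorem two_mul_mul_deriv_eq_of_sq_eventuallyEq {u w : 𝕜 → 𝕜} {x w' : 𝕜}
    (hu : DifferentiableAt 𝕜 u x) (hw : HasDerivAt w w' x) (h : (fun z => u z ^ 2) =ᶠ[𝓝 x] w) :
    2 * u x * deriv u x = w' := by
  simpa using ((hu.hasDerivAt.pow 2).congr_of_eventuallyEq h.symm).unique hw

theorem iteratedDeriv_two_mul_of_eq_zero {f g : 𝕜 → 𝕜} {x : 𝕜} (hf : ContDiffAt 𝕜 2 f x)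
    (hg : ContDiffAt 𝕜 2 g x) (hfx : f x = 0) :
    iteratedDeriv 2 (fun z => f z * g z) x =
      iteratedDeriv 2 f x * g x + 2 * deriv f x * deriv g x := by
  rw [iteratedDeriv_fun_mul hf hg]
  simp only [Finset.sum_range_succ, Finset.range_one, Finset.sum_singleton, Nat.choose_zero_right,
    Nat.choose_succ_self_right, Nat.choose_self, Nat.cast_one, Nat.cast_ofNat, iteratedDeriv_zero,
    iteratedDeriv_one, hfx, Nat.reduceAdd, tsub_zero, Nat.add_one_sub_one, tsub_self]
  ring

theorem deriv_mul_add_mul_sq (a b : 𝕜) :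
    deriv (fun z => a * z + b * z ^ 2) = fun z => a + 2 * b * z := by
  ext z
  rw [(((hasDerivAt_id' z).const_mul a).fun_add ((hasDerivAt_pow 2 z).const_mul b)).deriv]
  push_cast
  ring

theorem iteratedDeriv_two_mul_add_mul_sq (a b : 𝕜) :
    iteratedDeriv 2 (fun z => a * z + b * z ^ 2) = fun _ => 2 * b := by
  ext z
  rw [iteratedDeriv_succ, iteratedDeriv_one, deriv_mul_add_mul_sq]
  simp

theorem hasDerivAt_const_mul_pow_sub_sq_zero (c a b : 𝕜) {m : ℕ} (hm : 2 ≤ m) :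
    HasDerivAt (fun z => c * z ^ m - (a + b * z) ^ 2) (-(2 * a * b)) 0 := by
  refine (((hasDerivAt_pow m (0 : 𝕜)).const_mul c).fun_sub
    ((((hasDerivAt_id' (0 : 𝕜)).const_mul b).const_add a).fun_pow 2)).congr_deriv ?_
  rw [zero_pow (by omega)]
  push_cast
  ring

end

/-- For the resonant Hamiltonian `H = εI + AI² + BI^{n/2}cos(nφ)` with `n > 3` and
`ε ≠ 0`: with `R(z) = B²zⁿ - (εz + Az²)²` and `z·u(z)` the branch of `√R` with
`u 0 = iε`, the residue of `-P(z)/R(z)^{3/2}` at `z = 0` yields the zeroth-order twist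
`τ₀ = -ε³·J''(0) = 2A`, independent of `B`. -/
theorem stmt18 (n : ℕ) (hn : 3 < n) (A B ε : ℝ) (hε : ε ≠ 0) (u : ℂ → ℂ)
    (hu : AnalyticAt ℂ u 0) (hu0 : u 0 = I * ε)
    (hR : ∀ᶠ z in nhds (0:ℂ),
      (z * u z)^2 = (B:ℂ)^2 * z^n - ((ε:ℂ)*z + (A:ℂ)*z^2)^2) :
    -- residue of `-P/(z³u³)` at `z = 0` is `(1/2)·(d²/dz²)[-P/u³](0)`; `J''(0) = i·Res`
    (-(ε:ℂ)^3 * (I * ((1/2) *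
        iteratedDeriv 2 (fun z => -((ε:ℂ)*z + (A:ℂ)*z^2) / (u z)^3) 0))
      = ((2*A : ℝ) : ℂ)) := by
  have hεC : (ε : ℂ) ≠ 0 := ofReal_ne_zero.mpr hε
  have hu0_ne : u 0 ≠ 0 := by rw [hu0]; exact mul_ne_zero I_ne_zero hεC
  have hsq : (fun z => u z ^ 2) =ᶠ[𝓝 0] fun z => (B:ℂ)^2 * z^(n-2) - ((ε:ℂ) + A*z)^2 := by
    refine (hu.pow 2).eventuallyEq_of_pow_smul_eventuallyEq (k := 2) (by fun_prop) ?_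
    filter_upwards [hR] with z hz
    rw [smul_eq_mul, smul_eq_mul, sub_zero, ← mul_pow, hz, ← pow_sub_mul_pow z (by omega : 2 ≤ n)]
    ring
  have hu'0 : deriv u 0 = I * A := by
    have h := two_mul_mul_deriv_eq_of_sq_eventuallyEq hu.differentiableAt
      (hasDerivAt_const_mul_pow_sub_sq_zero _ _ _ (by omega : 2 ≤ n - 2)) hsq
    refine mul_left_cancel₀ (mul_ne_zero two_ne_zero hu0_ne) ?_
    rw [h, hu0]
    ring_nf
    simp [I_sq]
  have hinv_deriv := (hu.differentiableAt.hasDerivAt.fun_pow 3).fun_inv (pow_ne_zero 3 hu0_ne)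
  have hinv_smooth : ContDiffAt ℂ 2 (fun z => (u z ^ 3)⁻¹) 0 :=
    (hu.contDiffAt.pow 3).inv (pow_ne_zero 3 hu0_ne)
  simp_rw [div_eq_mul_inv]
  rw [iteratedDeriv_two_mul_of_eq_zero (by fun_prop) hinv_smooth (by simp),
    iteratedDeriv_fun_neg, iteratedDeriv_two_mul_add_mul_sq, deriv.fun_neg, deriv_mul_add_mul_sq,
    hinv_deriv.deriv, hu'0, hu0]
  field_simp
  ring_nf
  simp only [I_sq]
  push_cast
  ring
end
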